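/- Let (U,V) → X → (Y,Z) be finite random variables with X = f(U,V) deterministic, and suppose u₁ ≠ u₂ satisfy f(u₁,v) = f(u₂,v) for all v. Define U' by merging u₁ and u₂ (U' = U if U ∉ {u₁,u₂}, else U' = u₂). Then I(U;Y) + I(V;Z) − I(U;V) ≤ I(U';Y) + I(V;Z) − I(U';V). -/

import Mathlib

open scoped BigOperators

noncomputable def probOf {Ω α : Type*} [Fintype Ω] [DecidableEq α]
    (p : Ω → ℝ) (X : Ω → α) (a : α) : ℝ :=
  ∑ ω, if X ω = a then p ω else 0

noncomputable def entOf {Ω α : Type*} [Fintype Ω] [Fintype α] [DecidableEq α]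
    (p : Ω → ℝ) (X : Ω → α) : ℝ :=
  -∑ a, probOf p X a * Real.log (probOf p X a)

noncomputable def miOf {Ω α β : Type*} [Fintype Ω] [Fintype α] [DecidableEq α]
    [Fintype β] [DecidableEq β] (p : Ω → ℝ) (X : Ω → α) (Y : Ω → β) : ℝ :=
  entOf p X + entOf p Y - entOf p (fun ω => (X ω, Y ω))

def IsPMF {Ω : Type*} [Fintype Ω] (p : Ω → ℝ) : Prop :=
  (∀ ω, 0 ≤ p ω) ∧ ∑ ω, p ω = 1

/-- The Markov chain condition `(U,V) → X → (Y,Z)`: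
`(U,V)` and `(Y,Z)` are conditionally independent given `X`. -/
def MarkovUVXYZ {Ω 𝒰 𝒱 𝒳 𝒴 𝒵 : Type*} [Fintype Ω] [DecidableEq 𝒰] [DecidableEq 𝒱]
    [DecidableEq 𝒳] [DecidableEq 𝒴] [DecidableEq 𝒵]
    (p : Ω → ℝ) (U : Ω → 𝒰) (V : Ω → 𝒱) (X : Ω → 𝒳) (Y : Ω → 𝒴) (Z : Ω → 𝒵) : Prop :=
  ∀ u v x y z,
    probOf p (fun ω => (U ω, V ω, X ω, Y ω, Z ω)) (u, v, x, y, z) * probOf p X x =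
    probOf p (fun ω => (U ω, V ω, X ω)) (u, v, x) *
      probOf p (fun ω => (X ω, Y ω, Z ω)) (x, y, z)


/-! ### Auxiliary scalar lemmas -/

/-- The "merging gain" function `h(a,b) = (a+b)log(a+b) - a log a - b log b`. -/
noncomputable def hfun (a b : ℝ) : ℝ :=
  Real.negMulLog a + Real.negMulLog b - Real.negMulLog (a + b)

@[simp] lemma hfun_zero : hfun 0 0 = 0 := by simp [hfun]

lemma hfun_smul (t a b : ℝ) : hfun (t * a) (t * b) = t * hfun a b := by
  simp only [hfun, ← mul_add, Real.negMulLog_mul]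
  ring

lemma two_logsum {p1 p2 q1 q2 : ℝ} (hp1 : 0 ≤ p1) (hp2 : 0 ≤ p2)
    (hq1 : 0 < q1) (hq2 : 0 < q2) :
    (p1 + p2) * Real.log ((p1 + p2) / (q1 + q2)) ≤
      p1 * Real.log (p1 / q1) + p2 * Real.log (p2 / q2) := by
  have hQ : 0 < q1 + q2 := by linarith
  have h := Real.convexOn_mul_log.2 (Set.mem_Ici.2 (div_nonneg hp1 hq1.le))
    (Set.mem_Ici.2 (div_nonneg hp2 hq2.le))
    (by positivity : (0:ℝ) ≤ q1 / (q1 + q2)) (by positivity : (0:ℝ) ≤ q2 / (q1 + q2))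
    (by field_simp)
  have key : q1 / (q1 + q2) * (p1 / q1) + q2 / (q1 + q2) * (p2 / q2) = (p1 + p2) / (q1 + q2) := by
    field_simp
  rw [smul_eq_mul, smul_eq_mul, smul_eq_mul, smul_eq_mul, key] at h
  have h' := mul_le_mul_of_nonneg_left h hQ.le
  calc (p1 + p2) * Real.log ((p1 + p2) / (q1 + q2))
      = (q1 + q2) * ((p1 + p2) / (q1 + q2) * Real.log ((p1 + p2) / (q1 + q2))) := by
        field_simp
    _ ≤ (q1 + q2) * (q1 / (q1 + q2) * (p1 / q1 * Real.log (p1 / q1)) +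
          q2 / (q1 + q2) * (p2 / q2 * Real.log (p2 / q2))) := h'
    _ = p1 * Real.log (p1 / q1) + p2 * Real.log (p2 / q2) := by field_simp

lemma hfun_superadd {a b c d : ℝ} (ha : 0 ≤ a) (hb : 0 ≤ b) (hc : 0 ≤ c) (hd : 0 ≤ d) :
    hfun a b + hfun c d ≤ hfun (a + c) (b + d) := by
  rcases eq_or_lt_of_le (by linarith : (0:ℝ) ≤ a + b) with h1 | h1
  · have ha0 : a = 0 := by linarith
    have hb0 : b = 0 := by linarith
    simp [ha0, hb0]
  rcases eq_or_lt_of_le (by linarith : (0:ℝ) ≤ c + d) with h2 | h2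
  · have hc0 : c = 0 := by linarith
    have hd0 : d = 0 := by linarith
    simp [hc0, hd0]
  have key : ∀ p q : ℝ, 0 ≤ p → 0 < q →
      p * Real.log (p / q) = p * Real.log p - p * Real.log q := by
    intro p q hp hq
    rcases eq_or_lt_of_le hp with h | h
    · simp [← h]
    · rw [Real.log_div h.ne' hq.ne']; ring
  have L1 := two_logsum ha hc h1 h2
  have L2 := two_logsum hb hd h1 h2
  rw [key a _ ha h1, key c _ hc h2, key (a+c) _ (by linarith) (by linarith)] at L1
  rw [key b _ hb h1, key d _ hd h2, key (b+d) _ (by linarith) (by linarith)] at L2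
  simp only [hfun, Real.negMulLog, neg_mul]
  rw [show a + c + (b + d) = a + b + (c + d) from by ring]
  linarith [L1, L2]

lemma hfun_sum_le {ι : Type*} (s : Finset ι) (a b : ι → ℝ)
    (ha : ∀ i ∈ s, 0 ≤ a i) (hb : ∀ i ∈ s, 0 ≤ b i) :
    ∑ i ∈ s, hfun (a i) (b i) ≤ hfun (∑ i ∈ s, a i) (∑ i ∈ s, b i) := by
  induction s using Finset.cons_induction with
  | empty => simp
  | cons i s his ih =>
    simp only [Finset.sum_cons]
    have h1 : ∑ j ∈ s, hfun (a j) (b j) ≤ hfun (∑ j ∈ s, a j) (∑ j ∈ s, b j) :=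
      ih (fun j hj => ha j (Finset.mem_cons_of_mem hj))
        (fun j hj => hb j (Finset.mem_cons_of_mem hj))
    have h2 := hfun_superadd (ha i (Finset.mem_cons_self i s))
      (hb i (Finset.mem_cons_self i s))
      (Finset.sum_nonneg (fun j hj => ha j (Finset.mem_cons_of_mem hj)))
      (Finset.sum_nonneg (fun j hj => hb j (Finset.mem_cons_of_mem hj)))
    linarith

/-! ### Auxiliary `probOf` lemmas -/

section probOfLemmas
variable {Ω : Type*} [Fintype Ω] {p : Ω → ℝ}

lemma probOf_nonneg {α : Type*} [DecidableEq α] (hp : ∀ ω, 0 ≤ p ω) (X : Ω → α) (a : α) :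
    0 ≤ probOf p X a :=
  Finset.sum_nonneg fun ω _ => by split <;> [exact hp ω; rfl]

lemma probOf_congr {α β : Type*} [DecidableEq α] [DecidableEq β]
    (p : Ω → ℝ) {A : Ω → α} {B : Ω → β} {a : α} {b : β}
    (h : ∀ ω, A ω = a ↔ B ω = b) : probOf p A a = probOf p B b :=
  Finset.sum_congr rfl fun ω _ => by rw [if_congr (h ω) rfl rfl]

lemma probOf_mono {α β : Type*} [DecidableEq α] [DecidableEq β]
    (hp : ∀ ω, 0 ≤ p ω) {A : Ω → α} {B : Ω → β} {a : α} {b : β}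
    (h : ∀ ω, A ω = a → B ω = b) : probOf p A a ≤ probOf p B b := by
  refine Finset.sum_le_sum fun ω _ => ?_
  by_cases hA : A ω = a
  · simp [hA, h ω hA]
  · simp only [hA, if_false]
    split <;> [exact hp ω; rfl]

lemma probOf_marg {α β : Type*} [DecidableEq α] [Fintype β] [DecidableEq β]
    (p : Ω → ℝ) (R : Ω → α) (S : Ω → β) (a : α) :
    probOf p R a = ∑ b, probOf p (fun ω => (R ω, S ω)) (a, b) := by
  unfold probOf
  rw [Finset.sum_comm]
  refine Finset.sum_congr rfl fun ω _ => ?_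
  by_cases h : R ω = a
  · simp [h, Prod.ext_iff]
  · simp [h, Prod.ext_iff]

lemma probOf_comp {α β γ : Type*} [DecidableEq α] [Fintype β] [DecidableEq β] [DecidableEq γ]
    (p : Ω → ℝ) (R : Ω → α) (S : Ω → β) (g : β → γ) (a : α) (c : γ) :
    probOf p (fun ω => (R ω, g (S ω))) (a, c) =
      ∑ v ∈ Finset.univ.filter (fun v => g v = c), probOf p (fun ω => (R ω, S ω)) (a, v) := by
  unfold probOf
  rw [Finset.sum_comm]
  refine (Finset.sum_congr rfl fun ω _ => ?_).symm
  rw [Finset.sum_filter]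
  by_cases hR : R ω = a
  · by_cases hg : g (S ω) = c
    · rw [Finset.sum_eq_single (S ω)]
      · simp [hR, hg, Prod.ext_iff]
      · intro v _ hv
        simp [Prod.ext_iff, Ne.symm hv]
      · simp
    · refine (Finset.sum_eq_zero fun v _ => ?_).trans (by simp [Prod.ext_iff, hR, hg])
      by_cases h : g v = c
      · simp [h, Prod.ext_iff, show S ω ≠ v from fun hv => hg (hv ▸ h)]
      · simp [h]
  · refine (Finset.sum_eq_zero fun v _ => ?_).trans (by simp [Prod.ext_iff, hR])
    simp [Prod.ext_iff, hR]

lemma entOf_eq {α : Type*} [Fintype α] [DecidableEq α] (p : Ω → ℝ) (X : Ω → α) :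
    entOf p X = ∑ a, Real.negMulLog (probOf p X a) := by
  simp [entOf, Real.negMulLog_eq_neg, ← Finset.sum_neg_distrib]

/-- Entropy change under merging `u₁` into `u₂`, jointly with any `W`. -/
lemma ent_merge {𝒰 γ : Type*} [Fintype 𝒰] [DecidableEq 𝒰] [Fintype γ] [DecidableEq γ]
    (p : Ω → ℝ) (U : Ω → 𝒰) (W : Ω → γ) (u₁ u₂ : 𝒰) (hne : u₁ ≠ u₂) :
    entOf p (fun ω => (U ω, W ω)) -
        entOf p (fun ω => ((if U ω = u₁ then u₂ else U ω), W ω)) =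
      ∑ w, hfun (probOf p (fun ω => (U ω, W ω)) (u₁, w))
        (probOf p (fun ω => (U ω, W ω)) (u₂, w)) := by
  have q1 : ∀ w, probOf p (fun ω => ((if U ω = u₁ then u₂ else U ω), W ω)) (u₁, w) = 0 := by
    intro w
    refine Finset.sum_eq_zero fun ω _ => ?_
    by_cases h : U ω = u₁ <;> simp [h, Prod.ext_iff, hne, Ne.symm hne]
  have q2 : ∀ w, probOf p (fun ω => ((if U ω = u₁ then u₂ else U ω), W ω)) (u₂, w) =
      probOf p (fun ω => (U ω, W ω)) (u₁, w) + probOf p (fun ω => (U ω, W ω)) (u₂, w) := by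
    intro w
    unfold probOf
    rw [← Finset.sum_add_distrib]
    refine Finset.sum_congr rfl fun ω _ => ?_
    by_cases h : U ω = u₁ <;> by_cases hw : W ω = w <;>
      simp [h, hw, Prod.ext_iff, hne, Ne.symm hne]
  have q3 : ∀ u, u ≠ u₁ → u ≠ u₂ → ∀ w,
      probOf p (fun ω => ((if U ω = u₁ then u₂ else U ω), W ω)) (u, w) =
        probOf p (fun ω => (U ω, W ω)) (u, w) := by
    intro u h1 h2 w
    refine probOf_congr p fun ω => ?_
    by_cases h : U ω = u₁ <;> simp [h, Prod.ext_iff, Ne.symm h1, Ne.symm h2]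
  have split : ∀ g : 𝒰 → ℝ,
      ∑ u, g u = g u₁ + g u₂ + ∑ u ∈ (Finset.univ.erase u₁).erase u₂, g u := by
    intro g
    rw [← Finset.add_sum_erase _ g (Finset.mem_univ u₁),
      ← Finset.add_sum_erase _ g (Finset.mem_erase.2 ⟨Ne.symm hne, Finset.mem_univ u₂⟩),
      Finset.erase_right_comm]
    ring
  have comm : ∀ F : 𝒰 → γ → ℝ, ∑ u, ∑ w, F u w = ∑ w, ∑ u, F u w :=
    fun F => Finset.sum_comm
  rw [entOf_eq, entOf_eq, Fintype.sum_prod_type, Fintype.sum_prod_type,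
    comm (fun u w => Real.negMulLog (probOf p (fun ω => (U ω, W ω)) (u, w))),
    comm (fun u w => Real.negMulLog
      (probOf p (fun ω => ((if U ω = u₁ then u₂ else U ω), W ω)) (u, w)))]
  rw [← Finset.sum_sub_distrib]
  refine Finset.sum_congr rfl fun w _ => ?_
  rw [split (fun u => Real.negMulLog (probOf p (fun ω => (U ω, W ω)) (u, w))),
    split (fun u => Real.negMulLog
      (probOf p (fun ω => ((if U ω = u₁ then u₂ else U ω), W ω)) (u, w)))]
  have q3' : ∑ u ∈ (Finset.univ.erase u₁).erase u₂,
      Real.negMulLog (probOf p (fun ω => ((if U ω = u₁ then u₂ else U ω), W ω)) (u, w)) =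
      ∑ u ∈ (Finset.univ.erase u₁).erase u₂,
      Real.negMulLog (probOf p (fun ω => (U ω, W ω)) (u, w)) := by
    refine Finset.sum_congr rfl fun u hu => ?_
    have hu2 := Finset.mem_erase.1 hu
    have hu1 := Finset.mem_erase.1 hu2.2
    rw [q3 u hu1.1 hu2.1 w]
  rw [q3', q1 w, q2 w]
  simp [hfun]


end probOfLemmas

/-- Lemma `le:kld2` (merging step): let `(U,V) → X → (Y,Z)` be finite random variables
with `X = f(U,V)` deterministic, and suppose `u₁ ≠ u₂` satisfy `f(u₁,v) = f(u₂,v)` for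
all `v`.  Define `U'` by merging `u₁` into `u₂`.  Then
`I(U;Y) + I(V;Z) − I(U;V) ≤ I(U';Y) + I(V;Z) − I(U';V)`. -/
theorem merge_rows_does_not_decrease
    {Ω 𝒰 𝒱 𝒳 𝒴 𝒵 : Type*} [Fintype Ω] [Fintype 𝒰] [DecidableEq 𝒰]
    [Fintype 𝒱] [DecidableEq 𝒱] [Fintype 𝒳] [DecidableEq 𝒳]
    [Fintype 𝒴] [DecidableEq 𝒴] [Fintype 𝒵] [DecidableEq 𝒵]
    (p : Ω → ℝ) (hp : IsPMF p)
    (U : Ω → 𝒰) (V : Ω → 𝒱) (X : Ω → 𝒳) (Y : Ω → 𝒴) (Z : Ω → 𝒵)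
    (f : 𝒰 × 𝒱 → 𝒳) (hX : ∀ ω, X ω = f (U ω, V ω))
    (hM : MarkovUVXYZ p U V X Y Z)
    (u₁ u₂ : 𝒰) (hne : u₁ ≠ u₂) (hrows : ∀ v, f (u₁, v) = f (u₂, v)) :
    miOf p U Y + miOf p V Z - miOf p U V ≤
      miOf p (fun ω => if U ω = u₁ then u₂ else U ω) Y + miOf p V Z -
        miOf p (fun ω => if U ω = u₁ then u₂ else U ω) V := by
  obtain ⟨hp0, -⟩ := hp
  -- Step 1: sum over `v` is at most sum over `x`.
  have hA : ∀ x, probOf p (fun ω => (U ω, X ω)) (u₁, x) =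
      ∑ v ∈ Finset.univ.filter (fun v => f (u₂, v) = x),
        probOf p (fun ω => (U ω, V ω)) (u₁, v) := by
    intro x
    rw [show probOf p (fun ω => (U ω, X ω)) (u₁, x) =
        probOf p (fun ω => (U ω, f (u₂, V ω))) (u₁, x) from
      probOf_congr p fun ω => by
        simp only [Prod.mk.injEq]
        exact and_congr_right fun h => by rw [hX ω, h, hrows (V ω)]]
    exact probOf_comp p U V (fun v => f (u₂, v)) u₁ x
  have hB : ∀ x, probOf p (fun ω => (U ω, X ω)) (u₂, x) =
      ∑ v ∈ Finset.univ.filter (fun v => f (u₂, v) = x),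
        probOf p (fun ω => (U ω, V ω)) (u₂, v) := by
    intro x
    rw [show probOf p (fun ω => (U ω, X ω)) (u₂, x) =
        probOf p (fun ω => (U ω, f (u₂, V ω))) (u₂, x) from
      probOf_congr p fun ω => by
        simp only [Prod.mk.injEq]
        exact and_congr_right fun h => by rw [hX ω, h]]
    exact probOf_comp p U V (fun v => f (u₂, v)) u₂ x
  have step1 : ∑ v, hfun (probOf p (fun ω => (U ω, V ω)) (u₁, v))
        (probOf p (fun ω => (U ω, V ω)) (u₂, v)) ≤
      ∑ x, hfun (probOf p (fun ω => (U ω, X ω)) (u₁, x))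
        (probOf p (fun ω => (U ω, X ω)) (u₂, x)) := by
    rw [← Finset.sum_fiberwise_of_maps_to (g := fun v => f (u₂, v))
      (fun v _ => Finset.mem_univ (f (u₂, v)))
      (fun v => hfun (probOf p (fun ω => (U ω, V ω)) (u₁, v))
        (probOf p (fun ω => (U ω, V ω)) (u₂, v)))]
    refine Finset.sum_le_sum fun x _ => ?_
    rw [hA x, hB x]
    exact hfun_sum_le _ _ _ (fun v _ => probOf_nonneg hp0 _ _)
      (fun v _ => probOf_nonneg hp0 _ _)
  -- Markov consequence for the triple (U, X, Y)
  have hM2 : ∀ u x y, probOf p (fun ω => (U ω, X ω, Y ω)) (u, x, y) * probOf p X x =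
      probOf p (fun ω => (U ω, X ω)) (u, x) * probOf p (fun ω => (X ω, Y ω)) (x, y) := by
    intro u x y
    have m1 : probOf p (fun ω => (U ω, X ω, Y ω)) (u, x, y)
        = ∑ v, ∑ z, probOf p (fun ω => (U ω, V ω, X ω, Y ω, Z ω)) (u, v, x, y, z) := by
      rw [probOf_marg p (fun ω => (U ω, X ω, Y ω)) (fun ω => (V ω, Z ω)) (u, x, y),
        Fintype.sum_prod_type]
      exact Finset.sum_congr rfl fun v _ => Finset.sum_congr rfl fun z _ =>
        probOf_congr p fun ω => by simp only [Prod.mk.injEq]; tauto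
    have m2 : probOf p (fun ω => (U ω, X ω)) (u, x)
        = ∑ v, probOf p (fun ω => (U ω, V ω, X ω)) (u, v, x) := by
      rw [probOf_marg p (fun ω => (U ω, X ω)) V (u, x)]
      exact Finset.sum_congr rfl fun v _ =>
        probOf_congr p fun ω => by simp only [Prod.mk.injEq]; tauto
    have m3 : probOf p (fun ω => (X ω, Y ω)) (x, y)
        = ∑ z, probOf p (fun ω => (X ω, Y ω, Z ω)) (x, y, z) := by
      rw [probOf_marg p (fun ω => (X ω, Y ω)) Z (x, y)]
      exact Finset.sum_congr rfl fun z _ =>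
        probOf_congr p fun ω => by simp only [Prod.mk.injEq]; tauto
    rw [m1, m2, m3, Finset.sum_mul_sum, Finset.sum_mul]
    refine Finset.sum_congr rfl fun v _ => ?_
    rw [Finset.sum_mul]
    exact Finset.sum_congr rfl fun z _ => hM u v x y z
  have hXmarg : ∀ x, probOf p X x = ∑ y, probOf p (fun ω => (X ω, Y ω)) (x, y) :=
    fun x => probOf_marg p X Y x
  -- the channel weights
  set w : 𝒳 → 𝒴 → ℝ := fun x y =>
    if probOf p X x = 0 then 0 else probOf p (fun ω => (X ω, Y ω)) (x, y) / probOf p X x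
    with hw_def
  have hw0 : ∀ x y, 0 ≤ w x y := by
    intro x y
    rw [hw_def]
    dsimp only
    split
    · exact le_rfl
    · exact div_nonneg (probOf_nonneg hp0 _ _) (probOf_nonneg hp0 _ _)
  have hwsum : ∀ x, probOf p X x ≠ 0 → ∑ y, w x y = 1 := by
    intro x hx
    simp only [hw_def, if_neg hx]
    rw [← Finset.sum_div, ← hXmarg, div_self hx]
  have hzero : ∀ (u : 𝒰) x, probOf p X x = 0 →
      probOf p (fun ω => (U ω, X ω)) (u, x) = 0 := by
    intro u x hx
    refine le_antisymm ?_ (probOf_nonneg hp0 _ _)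
    rw [← hx]
    exact probOf_mono hp0 fun ω h => by
      simp only [Prod.mk.injEq] at h; exact h.2
  have hzero3 : ∀ (u : 𝒰) x y, probOf p X x = 0 →
      probOf p (fun ω => (U ω, X ω, Y ω)) (u, x, y) = 0 := by
    intro u x y hx
    refine le_antisymm ?_ (probOf_nonneg hp0 _ _)
    rw [← hx]
    exact probOf_mono hp0 fun ω h => by
      simp only [Prod.mk.injEq] at h; exact h.2.1
  have hdecomp : ∀ u x y, probOf p (fun ω => (U ω, X ω, Y ω)) (u, x, y) =
      probOf p (fun ω => (U ω, X ω)) (u, x) * w x y := by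
    intro u x y
    by_cases hx : probOf p X x = 0
    · rw [hzero3 u x y hx]
      simp [hw_def, hx]
    · simp only [hw_def, if_neg hx]
      rw [← mul_div_assoc, eq_div_iff hx]
      exact hM2 u x y
  have hUYdecomp : ∀ u y, probOf p (fun ω => (U ω, Y ω)) (u, y) =
      ∑ x, probOf p (fun ω => (U ω, X ω)) (u, x) * w x y := by
    intro u y
    rw [probOf_marg p (fun ω => (U ω, Y ω)) X (u, y)]
    refine Finset.sum_congr rfl fun x _ => ?_
    rw [← hdecomp u x y]
    exact probOf_congr p fun ω => by simp only [Prod.mk.injEq]; tauto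
  -- Step 2: sum over `x` is at most sum over `y`.
  have step2 : ∑ x, hfun (probOf p (fun ω => (U ω, X ω)) (u₁, x))
        (probOf p (fun ω => (U ω, X ω)) (u₂, x)) ≤
      ∑ y, hfun (probOf p (fun ω => (U ω, Y ω)) (u₁, y))
        (probOf p (fun ω => (U ω, Y ω)) (u₂, y)) := by
    have e1 : ∑ x, hfun (probOf p (fun ω => (U ω, X ω)) (u₁, x))
          (probOf p (fun ω => (U ω, X ω)) (u₂, x)) =
        ∑ y, ∑ x, hfun (probOf p (fun ω => (U ω, X ω)) (u₁, x) * w x y)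
          (probOf p (fun ω => (U ω, X ω)) (u₂, x) * w x y) := by
      rw [Finset.sum_comm]
      refine Finset.sum_congr rfl fun x _ => ?_
      by_cases hx : probOf p X x = 0
      · rw [hzero u₁ x hx, hzero u₂ x hx]
        simp
      · have : ∀ y : 𝒴, hfun (probOf p (fun ω => (U ω, X ω)) (u₁, x) * w x y)
            (probOf p (fun ω => (U ω, X ω)) (u₂, x) * w x y) =
            w x y * hfun (probOf p (fun ω => (U ω, X ω)) (u₁, x))
              (probOf p (fun ω => (U ω, X ω)) (u₂, x)) := by
          intro y
          rw [mul_comm (probOf p (fun ω => (U ω, X ω)) (u₁, x)) (w x y),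
            mul_comm (probOf p (fun ω => (U ω, X ω)) (u₂, x)) (w x y), hfun_smul]
        simp only [this]
        rw [← Finset.sum_mul, hwsum x hx, one_mul]
    rw [e1]
    refine Finset.sum_le_sum fun y _ => ?_
    rw [hUYdecomp u₁ y, hUYdecomp u₂ y]
    exact hfun_sum_le _ _ _
      (fun x _ => mul_nonneg (probOf_nonneg hp0 _ _) (hw0 x y))
      (fun x _ => mul_nonneg (probOf_nonneg hp0 _ _) (hw0 x y))
  -- assemble
  have e1 := ent_merge p U V u₁ u₂ hne
  have e2 := ent_merge p U Y u₁ u₂ hne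
  simp only [miOf]
  linarith [step1, step2, e1, e2]
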